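/- arXiv:math/0703174 — 5 statements merged into one kernel-verified Lean document; each statement's English description precedes it below -/
import Mathlib

section
/- Let A and B be complex p×q matrices (p, q ≥ 1) such that tr(BᴴA) = 0 and such that for every pair of complex numbers (λ, μ) there exists a complex scalar c(λ,μ) with (λA + μB)ᴴ(λA + μB) = c(λ,μ) · I_q. Then AᴴB = 0; in particular every column vector of A is orthogonal to every column vector of B for the standard Hermitian scalar product on ℂᵖ. -/
/-!
Polarization writes `2 • AᴴB` as a combination of the Hermitian squares of `A`, `B`, `A + B` and
`A + iB`, which are scalar matrices by hypothesis; so `AᴴB` is scalar. Its trace is the conjugate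
of `tr(BᴴA) = 0`, and a scalar matrix of trace zero vanishes.
-/

open Matrix

namespace Matrix

variable {m n : Type*} [Fintype m]

theorem two_smul_conjTranspose_mul (A B : Matrix m n ℂ) :
    (2 : ℂ) • (Aᴴ * B) = ((A + B)ᴴ * (A + B) - Aᴴ * A - Bᴴ * B)
      - Complex.I • ((A + Complex.I • B)ᴴ * (A + Complex.I • B) - Aᴴ * A - Bᴴ * B) := by
  simp only [conjTranspose_add, conjTranspose_smul, Matrix.add_mul, Matrix.mul_add,
    Matrix.smul_mul, Matrix.mul_smul, smul_add, smul_sub, smul_smul, Complex.star_def,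
    Complex.conj_I, mul_neg, Complex.I_mul_I, neg_neg]
  module

theorem conjTranspose_mul_mem_span_one [Fintype n] [DecidableEq n] {A B : Matrix m n ℂ}
    (h : ∀ l μ : ℂ, (l • A + μ • B)ᴴ * (l • A + μ • B) ∈ ℂ ∙ (1 : Matrix n n ℂ)) :
    Aᴴ * B ∈ ℂ ∙ (1 : Matrix n n ℂ) := by
  have hA := h 1 0
  have hB := h 0 1
  have hAB := h 1 1
  have hAIB := h 1 Complex.I
  simp only [one_smul, zero_smul, add_zero, zero_add] at hA hB hAB hAIB
  have h2 : (2 : ℂ) • (Aᴴ * B) ∈ ℂ ∙ (1 : Matrix n n ℂ) := by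
    rw [two_smul_conjTranspose_mul]
    exact Submodule.sub_mem _ (Submodule.sub_mem _ (Submodule.sub_mem _ hAB hA) hB)
      (Submodule.smul_mem _ _ (Submodule.sub_mem _ (Submodule.sub_mem _ hAIB hA) hB))
  exact (Submodule.smul_mem_iff _ two_ne_zero).1 h2

theorem eq_zero_of_mem_span_one_of_trace_eq_zero {K : Type*} [Ring K] [NoZeroDivisors K]
    [CharZero K] [Fintype n] [DecidableEq n] [Nonempty n] {X : Matrix n n K}
    (hX : X ∈ K ∙ (1 : Matrix n n K)) (htr : X.trace = 0) : X = 0 := by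
  obtain ⟨c, rfl⟩ := Submodule.mem_span_singleton.1 hX
  rw [trace_smul, trace_one, smul_eq_mul, mul_eq_zero] at htr
  simp [htr.resolve_right (Nat.cast_ne_zero.2 Fintype.card_ne_zero)]

end Matrix

theorem conjTranspose_mul_eq_zero_of_polarization_general (p q : ℕ) (hq : 1 ≤ q)
    (A B : Matrix (Fin p) (Fin q) ℂ)
    (horth : Matrix.trace (Bᴴ * A) = 0)
    (hcomb : ∀ l m : ℂ, ∃ c : ℂ,
      (l • A + m • B)ᴴ * (l • A + m • B) = c • (1 : Matrix (Fin q) (Fin q) ℂ)) :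
    Aᴴ * B = 0 := by
  have : Nonempty (Fin q) := ⟨⟨0, hq⟩⟩
  refine eq_zero_of_mem_span_one_of_trace_eq_zero
    (conjTranspose_mul_mem_span_one fun l μ => ?_) ?_
  · obtain ⟨c, hc⟩ := hcomb l μ
    exact Submodule.mem_span_singleton.2 ⟨c, hc.symm⟩
  · rw [← conjTranspose_conjTranspose B, ← conjTranspose_mul, trace_conjTranspose, horth,
      star_zero]

/-- Polarization step in the proof of Lemma 3.2 of the paper: if `tr(BᴴA) = 0` and every
complex linear combination `λA + μB` satisfies `(λA + μB)ᴴ(λA + μB) = c(λ,μ) · I_q`,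
then `AᴴB = 0`. -/
theorem conjTranspose_mul_eq_zero_of_polarization (p q : ℕ) (hp : 1 ≤ p) (hq : 1 ≤ q)
    (A B : Matrix (Fin p) (Fin q) ℂ)
    (horth : Matrix.trace (Bᴴ * A) = 0)
    (hcomb : ∀ l m : ℂ, ∃ c : ℂ,
      (l • A + m • B)ᴴ * (l • A + m • B) = c • (1 : Matrix (Fin q) (Fin q) ℂ)) :
    Aᴴ * B = 0 :=
  conjTranspose_mul_eq_zero_of_polarization_general p q hq A B horth hcomb
end

section
/- Let T, V, V' be finite-dimensional complex vector spaces. Let β : T → V' be a nonzero linear map and let γ : V → T* be a linear map (T* the complex dual of T). Assume the commutation relation: for all u ∈ V and all X, Y ∈ T, (γ(u)(Y))·β(X) = (γ(u)(X))·β(Y) in V'. Then the rank of γ is at most 1, i.e., dim_ℂ(im γ) ≤ 1. -/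
theorem Submodule.finrank_le_one_of_le_span_singleton {K M : Type*} [DivisionRing K]
    [AddCommGroup M] [Module K M] {s : Submodule K M} {v : M} (h : s ≤ K ∙ v) :
    Module.finrank K s ≤ 1 :=
  (Submodule.finrank_mono h).trans (by simpa using finrank_span_le_card ({v} : Set M))

namespace Module.Dual

variable {K T W : Type*} [Field K] [AddCommGroup T] [Module K T] [AddCommGroup W] [Module K W]

theorem eq_smul_comp_of_smul_comm {β : T →ₗ[K] W} {ℓ : Dual K W} {X₀ : T} (hℓ : ℓ (β X₀) = 1)
    {φ : Dual K T} (hφ : ∀ X Y, φ Y • β X = φ X • β Y) : φ = φ X₀ • ℓ ∘ₗ β := by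
  ext Y
  simpa [hℓ] using congrArg ℓ (hφ X₀ Y)

theorem mem_span_comp_of_smul_comm {β : T →ₗ[K] W} {ℓ : Dual K W} {X₀ : T} (hℓ : ℓ (β X₀) = 1)
    {φ : Dual K T} (hφ : ∀ X Y, φ Y • β X = φ X • β Y) : φ ∈ K ∙ ℓ ∘ₗ β :=
  Submodule.mem_span_singleton.mpr ⟨φ X₀, (eq_smul_comp_of_smul_comm hℓ hφ).symm⟩

end Module.Dual

theorem rank_le_one_of_commutation_general
    (T V V' : Type*) [AddCommGroup T] [Module ℂ T]
    [AddCommGroup V] [Module ℂ V]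
    [AddCommGroup V'] [Module ℂ V']
    (β : T →ₗ[ℂ] V') (hβ : β ≠ 0)
    (γ : V →ₗ[ℂ] Module.Dual ℂ T)
    (hcomm : ∀ (u : V) (X Y : T), (γ u Y) • β X = (γ u X) • β Y) :
    Module.finrank ℂ (LinearMap.range γ) ≤ 1 := by
  obtain ⟨X₀, hX₀⟩ := DFunLike.ne_iff.mp hβ
  obtain ⟨ℓ, hℓ⟩ := Module.Projective.exists_dual_eq_one ℂ hX₀
  apply Submodule.finrank_le_one_of_le_span_singleton (v := ℓ ∘ₗ β)
  rintro _ ⟨u, rfl⟩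
  exact Module.Dual.mem_span_comp_of_smul_comm hℓ (hcomm u)

/-- Pointwise linear algebra of the Lemma of Section 3.3.2 of the paper: if
`β : T → V'` is a nonzero linear map and `γ : V → T*` satisfies the commutation
relation `(γ u)(Y) • β X = (γ u)(X) • β Y` for all `u, X, Y`, then `rank γ ≤ 1`. -/
theorem rank_le_one_of_commutation
    (T V V' : Type*) [AddCommGroup T] [Module ℂ T] [FiniteDimensional ℂ T]
    [AddCommGroup V] [Module ℂ V] [FiniteDimensional ℂ V]
    [AddCommGroup V'] [Module ℂ V'] [FiniteDimensional ℂ V']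
    (β : T →ₗ[ℂ] V') (hβ : β ≠ 0)
    (γ : V →ₗ[ℂ] Module.Dual ℂ T)
    (hcomm : ∀ (u : V) (X Y : T), (γ u Y) • β X = (γ u X) • β Y) :
    Module.finrank ℂ (LinearMap.range γ) ≤ 1 :=
  rank_le_one_of_commutation_general T V V' β hβ γ hcomm
end

section
/- Let T, V, W be finite-dimensional complex vector spaces with dim_ℂ T ≥ 2. Let β : W ⊗_ℂ T → V be an injective linear map and let γ : V → Hom_ℂ(T, W) be a linear map. Assume the commutation relation: for all v ∈ V and all X, Y ∈ T, β((γ(v)(Y)) ⊗ X) = β((γ(v)(X)) ⊗ Y). Then γ = 0. -/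
open TensorProduct

/- Injectivity of `β` turns the commutation relation into the identity
`γ v Y ⊗ X = γ v X ⊗ Y` in `W ⊗ T`. Since `dim T ≥ 2`, every `X` has some `Y` outside `ℂ ∙ X`;
a functional `f` vanishing on `X` but not on `Y` then sends this identity, under `id ⊗ f`,
to `0 = f Y • γ v X`. -/

theorem TensorProduct.eq_zero_of_tmul_eq_tmul_of_notMem_span_singleton
    {K M N : Type*} [Field K] [AddCommGroup M] [Module K M] [AddCommGroup N] [Module K N]
    {m m' : M} {x y : N} (hy : y ∉ K ∙ x) (h : m ⊗ₜ[K] x = m' ⊗ₜ[K] y) : m' = 0 := by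
  obtain ⟨f, hfy, hfx⟩ := Submodule.exists_dual_map_eq_bot_of_notMem hy inferInstance
  have hfx : f x = 0 := by
    simpa [hfx] using Submodule.mem_map_of_mem (f := f) (Submodule.mem_span_singleton_self x)
  have := congrArg ((TensorProduct.rid K M).toLinearMap ∘ₗ LinearMap.lTensor M f) h
  simp only [LinearMap.comp_apply, LinearMap.lTensor_tmul, LinearEquiv.coe_coe, rid_tmul,
    hfx, zero_smul] at this
  exact (smul_eq_zero.mp this.symm).resolve_left hfy

theorem Submodule.exists_notMem_span_singleton_of_one_lt_finrank
    {K V : Type*} [Field K] [AddCommGroup V] [Module K V]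
    (h : 1 < Module.finrank K V) (x : V) : ∃ y, y ∉ K ∙ x := by
  have hlt : K ∙ x < ⊤ := span_lt_top_of_card_lt_finrank (by simpa using h)
  obtain ⟨y, -, hy⟩ := SetLike.exists_of_lt hlt
  exact ⟨y, hy⟩

theorem gamma_eq_zero_of_beta_injective_general
    (T V W : Type*) [AddCommGroup T] [Module ℂ T]
    [AddCommGroup V] [Module ℂ V]
    [AddCommGroup W] [Module ℂ W]
    (hT : 2 ≤ Module.finrank ℂ T)
    (β : W ⊗[ℂ] T →ₗ[ℂ] V) (hβ : Function.Injective β)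
    (γ : V →ₗ[ℂ] (T →ₗ[ℂ] W))
    (hcomm : ∀ (v : V) (X Y : T), β ((γ v Y) ⊗ₜ[ℂ] X) = β ((γ v X) ⊗ₜ[ℂ] Y)) :
    γ = 0 := by
  ext v X
  obtain ⟨Y, hY⟩ := Submodule.exists_notMem_span_singleton_of_one_lt_finrank hT X
  exact eq_zero_of_tmul_eq_tmul_of_notMem_span_singleton hY (hβ (hcomm v X Y))

/-- Pointwise linear algebra of the Lemma of Section 3.4 of the paper: if
`dim_ℂ T ≥ 2`, `β : W ⊗ T → V` is injective and `γ : V → Hom(T, W)` satisfies the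
commutation relation `β((γ v Y) ⊗ X) = β((γ v X) ⊗ Y)`, then `γ = 0`. -/
theorem gamma_eq_zero_of_beta_injective
    (T V W : Type*) [AddCommGroup T] [Module ℂ T] [FiniteDimensional ℂ T]
    [AddCommGroup V] [Module ℂ V] [FiniteDimensional ℂ V]
    [AddCommGroup W] [Module ℂ W] [FiniteDimensional ℂ W]
    (hT : 2 ≤ Module.finrank ℂ T)
    (β : W ⊗[ℂ] T →ₗ[ℂ] V) (hβ : Function.Injective β)
    (γ : V →ₗ[ℂ] (T →ₗ[ℂ] W))
    (hcomm : ∀ (v : V) (X Y : T), β ((γ v Y) ⊗ₜ[ℂ] X) = β ((γ v X) ⊗ₜ[ℂ] Y)) :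
    γ = 0 :=
  gamma_eq_zero_of_beta_injective_general T V W hT β hβ γ hcomm
end

section
/- Let T, V, W be finite-dimensional complex vector spaces with dim_ℂ T ≥ 2. Let γ : V → Hom_ℂ(T, W) be a surjective linear map and let β : W ⊗_ℂ T → V be a linear map. Assume the commutation relation: for all v ∈ V and all X, Y ∈ T, β((γ(v)(Y)) ⊗ X) = β((γ(v)(X)) ⊗ Y). Then β = 0. -/
/-!
Since `γ` is onto, the relation holds with `γ v` replaced by any `f : T → W`. Given `w ⊗ t`,
take `f = φ(·) w` for a nonzero functional `φ` with `φ t = 0` (it exists because `dim T ≥ 2`):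
the relation becomes `φ(Y) β(w ⊗ t) = 0` for all `Y`, so `β` kills every pure tensor.
-/

open TensorProduct Module

theorem Module.exists_dual_ne_zero_apply_eq_zero {K M : Type*} [Field K] [AddCommGroup M]
    [Module K M] (hM : 2 ≤ finrank K M) (t : M) :
    ∃ φ : Dual K M, φ ≠ 0 ∧ φ t = 0 := by
  have hlt : K ∙ t < ⊤ := by
    refine lt_top_iff_ne_top.mpr fun htop => ?_
    have : finrank K (K ∙ t) ≤ 1 := by
      simpa using finrank_span_le_card (R := K) ({t} : Set M)
    rw [htop, finrank_top] at this
    omega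
  obtain ⟨φ, hφ, hmap⟩ := Submodule.exists_dual_map_eq_bot_of_lt_top hlt inferInstance
  rw [Submodule.map_span, Set.image_singleton, Submodule.span_singleton_eq_bot] at hmap
  exact ⟨φ, hφ, hmap⟩

theorem LinearMap.eq_zero_of_apply_tmul_symm {K W T V : Type*} [Field K]
    [AddCommGroup W] [Module K W] [AddCommGroup T] [Module K T] [AddCommGroup V] [Module K V]
    (hT : 2 ≤ finrank K T) (β : W ⊗[K] T →ₗ[K] V)
    (hβ : ∀ (f : T →ₗ[K] W) (X Y : T), β (f Y ⊗ₜ X) = β (f X ⊗ₜ Y)) : β = 0 := by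
  refine TensorProduct.ext' fun w t => ?_
  obtain ⟨φ, hφ, hφt⟩ := exists_dual_ne_zero_apply_eq_zero hT t
  obtain ⟨Y, hY⟩ := DFunLike.ne_iff.mp hφ
  have h : φ Y • β (w ⊗ₜ t) = 0 := by
    simpa only [LinearMap.smulRight_apply, hφt, zero_smul, zero_tmul, map_zero, ← smul_tmul',
      map_smul] using hβ (φ.smulRight w) t Y
  exact (smul_eq_zero.mp h).resolve_left hY

theorem beta_eq_zero_of_gamma_surjective_general
    (T V W : Type*) [AddCommGroup T] [Module ℂ T]
    [AddCommGroup V] [Module ℂ V]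
    [AddCommGroup W] [Module ℂ W]
    (hT : 2 ≤ Module.finrank ℂ T)
    (γ : V →ₗ[ℂ] (T →ₗ[ℂ] W)) (hγ : Function.Surjective γ)
    (β : W ⊗[ℂ] T →ₗ[ℂ] V)
    (hcomm : ∀ (v : V) (X Y : T), β ((γ v Y) ⊗ₜ[ℂ] X) = β ((γ v X) ⊗ₜ[ℂ] Y)) :
    β = 0 :=
  β.eq_zero_of_apply_tmul_symm hT fun f X Y => by
    obtain ⟨v, rfl⟩ := hγ f
    exact hcomm v X Y

/-- Pointwise linear algebra of the second Lemma of Section 3.4 of the paper: if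
`dim_ℂ T ≥ 2`, `γ : V → Hom(T, W)` is surjective and `β : W ⊗ T → V` satisfies the
commutation relation `β((γ v Y) ⊗ X) = β((γ v X) ⊗ Y)`, then `β = 0`. -/
theorem beta_eq_zero_of_gamma_surjective
    (T V W : Type*) [AddCommGroup T] [Module ℂ T] [FiniteDimensional ℂ T]
    [AddCommGroup V] [Module ℂ V] [FiniteDimensional ℂ V]
    [AddCommGroup W] [Module ℂ W] [FiniteDimensional ℂ W]
    (hT : 2 ≤ Module.finrank ℂ T)
    (γ : V →ₗ[ℂ] (T →ₗ[ℂ] W)) (hγ : Function.Surjective γ)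
    (β : W ⊗[ℂ] T →ₗ[ℂ] V)
    (hcomm : ∀ (v : V) (X Y : T), β ((γ v Y) ⊗ₜ[ℂ] X) = β ((γ v X) ⊗ₜ[ℂ] Y)) :
    β = 0 :=
  beta_eq_zero_of_gamma_surjective_general T V W hT γ hγ β hcomm
end

section
/- Let p ≥ 1 and n ≥ 1, let T be a finite-dimensional complex vector space, and let β, γ : T → ℂᵖ be linear maps (values regarded as p×1 column matrices). For X ∈ T let θ(X) be the (p+2)×(p+2) complex matrix with block form θ(X) = [[0, β(X), γ(X)], [γ(X)ᵀ, 0, 0], [β(X)ᵀ, 0, 0]] (blocks of sizes p, 1, 1). Assume that θ(X)θ(Y) = θ(Y)θ(X) for all X, Y ∈ T, and that θ(X₁)θ(X₂)⋯θ(X_n) = 0 for all X₁, …, X_n ∈ T. Then γ(X)ᵀβ(Y) = 0 for all X, Y ∈ T, and moreover either β(X)ᵀβ(Y) = 0 for all X, Y ∈ T or γ(X)ᵀγ(Y) = 0 for all X, Y ∈ T. -/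
/-!
Write `θ(X) = [[0, A(X)], [B(X), 0]]` with `A(X) = (β(X), γ(X))` and `B(X) = (ᵗγ(X); ᵗβ(X))`.
Then `θ(X)θ(Y)` is block diagonal with lower block
`N(X, Y) = B(X)A(Y) = [[ᵗγ(X)β(Y), ᵗγ(X)γ(Y)], [ᵗβ(X)β(Y), ᵗβ(X)γ(Y)]]`.
Commutativity makes `ᵗγ(X)β(Y)` symmetric in `X, Y`, so the trace of the nilpotent matrix
`N(X, Y)` is `2 ᵗγ(X)β(Y)`, which therefore vanishes. Then `N(X, Y)` is off-diagonal, and the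
nilpotent product `N(X, Y)N(Z, W)` has the scalar `ᵗγ(X)γ(Y) · ᵗβ(Z)β(W)` as a diagonal entry,
which must vanish for all `X, Y, Z, W`.
-/

open Matrix

namespace Matrix

variable {l m n o p q α : Type*}

theorem fromBlocks_zero_mul_fromBlocks_zero [Fintype l] [Fintype m] [NonUnitalNonAssocSemiring α]
    (A : Matrix n m α) (B : Matrix o l α) (A' : Matrix l q α) (B' : Matrix m p α) :
    fromBlocks 0 A B 0 * fromBlocks 0 A' B' 0 = fromBlocks (A * B') 0 0 (B * A') := by
  simp [fromBlocks_multiply]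

section Diagonal

variable [Fintype m] [Fintype n] [DecidableEq m] [DecidableEq n] [Semiring α]
  {A : Matrix m m α} {D : Matrix n n α}

theorem IsNilpotent.of_fromBlocks_diagonal_left (h : IsNilpotent (fromBlocks A 0 0 D)) :
    IsNilpotent A :=
  let ⟨k, hk⟩ := h
  ⟨k, by rw [fromBlocks_diagonal_pow, ← fromBlocks_zero, fromBlocks_inj] at hk; exact hk.1⟩

theorem IsNilpotent.of_fromBlocks_diagonal_right (h : IsNilpotent (fromBlocks A 0 0 D)) :
    IsNilpotent D :=
  let ⟨k, hk⟩ := h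
  ⟨k, by rw [fromBlocks_diagonal_pow, ← fromBlocks_zero, fromBlocks_inj] at hk; exact hk.2.2.2⟩

end Diagonal

theorem trace_fromBlocks [Fintype m] [Fintype n] [AddCommMonoid α] (A : Matrix m m α)
    (B : Matrix m n α) (C : Matrix n m α) (D : Matrix n n α) :
    trace (fromBlocks A B C D) = trace A + trace D := by
  simp [trace, Fintype.sum_sum_type]

section Unique

variable [Fintype m] [Unique m]

theorem trace_eq_zero_iff_of_unique [AddCommMonoid α] {A : Matrix m m α} :
    trace A = 0 ↔ A = 0 := by
  simpa [trace] using (uniqueAddEquiv (m := m) (n := m) (A := α)).map_eq_zero_iff (x := A)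

instance noZeroDivisors_of_unique [NonUnitalNonAssocSemiring α] [NoZeroDivisors α] :
    NoZeroDivisors (Matrix m m α) :=
  uniqueEquiv.injective.noZeroDivisors _ rfl fun M N ↦ by simp [mul_apply]

end Unique

end Matrix

theorem forall_eq_zero_or_forall_eq_zero_of_mul_eq_zero {M₀ ι κ : Type*} [MulZeroClass M₀]
    [NoZeroDivisors M₀] {f : ι → M₀} {g : κ → M₀} (h : ∀ i k, f i * g k = 0) :
    (∀ i, f i = 0) ∨ ∀ k, g k = 0 := by
  by_contra! ⟨⟨i, hi⟩, ⟨k, hk⟩⟩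
  exact mul_ne_zero hi hk (h i k)

section HiggsField

variable {R m T : Type*} [CommRing R] [Fintype m]

def higgsField (β γ : T → Matrix m (Fin 1) R) (X : T) :
    Matrix (m ⊕ (Fin 1 ⊕ Fin 1)) (m ⊕ (Fin 1 ⊕ Fin 1)) R :=
  fromBlocks 0 (fromCols (β X) (γ X)) (fromRows (γ X)ᵀ (β X)ᵀ) 0

variable {β γ : T → Matrix m (Fin 1) R}

theorem higgsField_mul_higgsField (X Y : T) :
    higgsField β γ X * higgsField β γ Y =
      fromBlocks (fromCols (β X) (γ X) * fromRows (γ Y)ᵀ (β Y)ᵀ) 0 0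
        (fromBlocks ((γ X)ᵀ * β Y) ((γ X)ᵀ * γ Y) ((β X)ᵀ * β Y) ((β X)ᵀ * γ Y)) := by
  rw [higgsField, higgsField, fromBlocks_zero_mul_fromBlocks_zero, fromRows_mul_fromCols]

theorem gamma_transpose_mul_beta_symm {X Y : T}
    (hXY : Commute (higgsField β γ X) (higgsField β γ Y)) :
    (γ X)ᵀ * β Y = (γ Y)ᵀ * β X := by
  simpa [higgsField_mul_higgsField] using congr_arg (fun M ↦ M.toBlocks₂₂.toBlocks₁₁) hXY.eq

theorem isNilpotent_fromBlocks_transpose_mul [DecidableEq m] {X Y : T}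
    (hXY : Commute (higgsField β γ X) (higgsField β γ Y)) (hX : IsNilpotent (higgsField β γ X)) :
    IsNilpotent
      (fromBlocks ((γ X)ᵀ * β Y) ((γ X)ᵀ * γ Y) ((β X)ᵀ * β Y) ((β X)ᵀ * γ Y)) := by
  have h := hXY.isNilpotent_mul_right hX
  rw [higgsField_mul_higgsField] at h
  exact h.of_fromBlocks_diagonal_right

variable [IsDomain R] [CharZero R] [DecidableEq m]

theorem gamma_transpose_mul_beta_eq_zero
    (hcomm : ∀ X Y, Commute (higgsField β γ X) (higgsField β γ Y))
    (hnil : ∀ X, IsNilpotent (higgsField β γ X)) (X Y : T) :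
    (γ X)ᵀ * β Y = 0 := by
  have htrace := (isNilpotent_trace_of_isNilpotent
    (isNilpotent_fromBlocks_transpose_mul (hcomm X Y) (hnil X))).eq_zero
  rw [trace_fromBlocks, ← trace_transpose ((β X)ᵀ * γ Y), transpose_mul, transpose_transpose,
    ← gamma_transpose_mul_beta_symm (hcomm X Y), add_self_eq_zero] at htrace
  exact trace_eq_zero_iff_of_unique.mp htrace

theorem beta_transpose_mul_beta_or_gamma_transpose_mul_gamma_eq_zero
    (hcomm : ∀ X Y, Commute (higgsField β γ X) (higgsField β γ Y))
    (hnil : ∀ X, IsNilpotent (higgsField β γ X)) :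
    (∀ X Y, (β X)ᵀ * β Y = 0) ∨ ∀ X Y, (γ X)ᵀ * γ Y = 0 := by
  have hβγ (X Y : T) : (β X)ᵀ * γ Y = 0 := by
    rw [← transpose_transpose (γ Y), ← transpose_mul,
      gamma_transpose_mul_beta_eq_zero hcomm hnil, transpose_zero]
  have hN (X Y Z W : T) : IsNilpotent ((γ X)ᵀ * γ Y * ((β Z)ᵀ * β W)) := by
    have hcomm₂ : Commute (higgsField β γ X * higgsField β γ Y)
        (higgsField β γ Z * higgsField β γ W) :=
      ((hcomm X Z).mul_right (hcomm X W)).mul_left ((hcomm Y Z).mul_right (hcomm Y W))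
    have h := hcomm₂.isNilpotent_mul_right ((hcomm X Y).isNilpotent_mul_right (hnil X))
    rw [higgsField_mul_higgsField, higgsField_mul_higgsField, fromBlocks_multiply] at h
    simp only [Matrix.mul_zero, Matrix.zero_mul, add_zero, zero_add] at h
    have h₂₂ := h.of_fromBlocks_diagonal_right
    simp only [gamma_transpose_mul_beta_eq_zero hcomm hnil, hβγ,
      fromBlocks_zero_mul_fromBlocks_zero] at h₂₂
    exact h₂₂.of_fromBlocks_diagonal_left
  have hprod (X Y Z W : T) : (γ X)ᵀ * γ Y * ((β Z)ᵀ * β W) = 0 := (hN X Y Z W).eq_zero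
  exact (forall_eq_zero_or_forall_eq_zero_of_mul_eq_zero
    (f := fun q : T × T ↦ (γ q.1)ᵀ * γ q.2) (g := fun q : T × T ↦ (β q.1)ᵀ * β q.2)
    fun q r ↦ hprod q.1 q.2 r.1 r.2).symm.imp (fun h X Y ↦ h (X, Y)) fun h X Y ↦ h (X, Y)

end HiggsField

theorem so_p2_higgs_field_structure_general (p n : ℕ)
    (T : Type*) [AddCommGroup T] [Module ℂ T]
    (β γ : T →ₗ[ℂ] Matrix (Fin p) (Fin 1) ℂ)
    (θ : T → Matrix ((Fin p) ⊕ ((Fin 1) ⊕ (Fin 1))) ((Fin p) ⊕ ((Fin 1) ⊕ (Fin 1))) ℂ)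
    (hθ : ∀ X : T, θ X =
      Matrix.fromBlocks 0 (Matrix.fromCols (β X) (γ X))
        (Matrix.fromRows (γ X)ᵀ (β X)ᵀ) 0)
    (hcomm : ∀ X Y : T, θ X * θ Y = θ Y * θ X)
    (hnilp : ∀ Xs : Fin n → T, (List.ofFn (fun i => θ (Xs i))).prod = 0) :
    (∀ X Y : T, (γ X)ᵀ * β Y = 0) ∧
      ((∀ X Y : T, (β X)ᵀ * β Y = 0) ∨ (∀ X Y : T, (γ X)ᵀ * γ Y = 0)) := by
  obtain rfl : θ = higgsField β γ := funext hθ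
  have hnil (X : T) : IsNilpotent (higgsField β γ X) :=
    ⟨n, by simpa [List.ofFn_const, List.prod_replicate] using hnilp fun _ ↦ X⟩
  exact ⟨gamma_transpose_mul_beta_eq_zero hcomm hnil,
    beta_transpose_mul_beta_or_gamma_transpose_mul_gamma_eq_zero hcomm hnil⟩

/-- Pointwise linear-algebra claim in the proof of Theorem 4.1 of the paper, for
`SO₀(p,2)`-Higgs bundles: if the Higgs field
`θ(X) = [[0, β(X), γ(X)], [ᵗγ(X), 0, 0], [ᵗβ(X), 0, 0]]` (blocks of sizes `p, 1, 1`)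
satisfies `θ(X)θ(Y) = θ(Y)θ(X)` for all `X, Y` and is nilpotent of order `n`
(`θ(X₁)⋯θ(Xₙ) = 0` for all `X₁, …, Xₙ`), then `ᵗγβ = 0` and moreover either
`ᵗββ = 0` identically or `ᵗγγ = 0` identically. -/
theorem so_p2_higgs_field_structure (p n : ℕ) (hp : 1 ≤ p) (hn : 1 ≤ n)
    (T : Type*) [AddCommGroup T] [Module ℂ T] [FiniteDimensional ℂ T]
    (β γ : T →ₗ[ℂ] Matrix (Fin p) (Fin 1) ℂ)
    (θ : T → Matrix ((Fin p) ⊕ ((Fin 1) ⊕ (Fin 1))) ((Fin p) ⊕ ((Fin 1) ⊕ (Fin 1))) ℂ)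
    (hθ : ∀ X : T, θ X =
      Matrix.fromBlocks 0 (Matrix.fromCols (β X) (γ X))
        (Matrix.fromRows (γ X)ᵀ (β X)ᵀ) 0)
    (hcomm : ∀ X Y : T, θ X * θ Y = θ Y * θ X)
    (hnilp : ∀ Xs : Fin n → T, (List.ofFn (fun i => θ (Xs i))).prod = 0) :
    (∀ X Y : T, (γ X)ᵀ * β Y = 0) ∧
      ((∀ X Y : T, (β X)ᵀ * β Y = 0) ∨ (∀ X Y : T, (γ X)ᵀ * γ Y = 0)) :=
  so_p2_higgs_field_structure_general p n T β γ θ hθ hcomm hnilp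
end
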